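/- arXiv:2503.04448 — 2 statements merged into one kernel-verified Lean document; each statement's English description precedes it below -/
import Mathlib

section
/- Let ρ ∈ (0,1), let π be a bounded probability density on [0,1], and let c > 0. Define f_α(x,y) = (c·π(x)/(1−ρ)) · ∫*_{u=x}^{y} [ρ·π(u) + 1−ρ] du. Then for all x, y ∈ [0,1]: [ρ·π(y) + 1−ρ]·f_α(x,y) = ρ·∫*_{u=x}^{y} [ρ·π(u) + 1−ρ]·( π(y)·f_α(x,u) + π(x)·f_α(y,u) ) du + c·π(x)·∫*_{u=x}^{y} [ρ·π(u) + 1−ρ] du. -/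
open MeasureTheory

/-- Circular integral: `∫*_{u=a}^{b} h(u) du` on the circle `[0,1)`.
It equals `∫_a^b h` if `a ≤ b` and `∫_a^1 h + ∫_0^b h` if `a > b`. -/
noncomputable def cint (a b : ℝ) (h : ℝ → ℝ) : ℝ :=
  if a ≤ b then ∫ u in a..b, h u
  else (∫ u in a..(1 : ℝ), h u) + ∫ u in (0 : ℝ)..b, h u

/-!
Write `g = ρ π + 1 - ρ` and `D x y = ∫*_{u=x}^{y} g`, so that `fα x y = c π(x) D(x,y) / (1 - ρ)` and
`∫_0^1 g = 1`. For `u` inside the arc from `x` to `y`, going from `y` to `u` covers the whole circle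
except the arc from `u` to `y`, so `D(y,u) = 1 - D(x,y) + D(x,u)` and the integrand on the right is
`c π(x) π(y) / (1 - ρ) · g(u) (1 - D(x,y) + 2 D(x,u))`. Along the arc, `u ↦ D(x,u)` is an
absolutely continuous primitive of `g`, whence `∫* g(u) D(x,u) du = D(x,y)² / 2`, and the right-hand
side collapses to `c π(x) D(x,y) (ρ π(y) + 1 - ρ) / (1 - ρ)`.
-/

open Set

theorem integral_mul_const_add_primitive {g : ℝ → ℝ} {a b : ℝ}
    (hg : IntervalIntegrable g volume a b) (C : ℝ) :
    ∫ u in a..b, g u * (C + ∫ v in a..u, g v)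
      = C * (∫ u in a..b, g u) + (∫ u in a..b, g u) ^ 2 / 2 := by
  set F : ℝ → ℝ := fun u => C + ∫ v in a..u, g v with hF
  have hFac : AbsolutelyContinuousOnInterval F a b :=
    contDiffOn_const.absolutelyContinuousOnInterval.fun_add
      (hg.absolutelyContinuousOnInterval_intervalIntegral left_mem_uIcc)
  have hderiv : ∀ᵐ u, u ∈ uIoc a b →
      deriv F u * F u + F u * deriv F u = 2 * (g u * F u) := by
    filter_upwards [hg.ae_hasDerivAt_integral] with u hu hmem
    rw [((hu (uIoc_subset_uIcc hmem) a left_mem_uIcc).const_add C).deriv]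
    ring
  have hFTC := hFac.integral_deriv_mul_eq_sub hFac
  rw [intervalIntegral.integral_congr_ae hderiv, intervalIntegral.integral_const_mul] at hFTC
  simp only [hF, intervalIntegral.integral_same] at hFTC
  linarith

theorem IntervalIntegrable.mono_Icc {g : ℝ → ℝ} {a b s t : ℝ}
    (hg : IntervalIntegrable g volume a b) (hs : s ∈ Icc a b) (ht : t ∈ Icc a b) :
    IntervalIntegrable g volume s t :=
  hg.mono_set (uIcc_subset_uIcc (Icc_subset_uIcc hs) (Icc_subset_uIcc ht))

def openArc (x y : ℝ) : Set ℝ := if x ≤ y then Ioo x y else Ioo x 1 ∪ Ioo 0 y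

section Circle

variable {g : ℝ → ℝ} {x y : ℝ}

theorem cint_of_le (hxy : x ≤ y) (h : ℝ → ℝ) : cint x y h = ∫ u in x..y, h u := if_pos hxy

theorem cint_of_not_le (hxy : ¬x ≤ y) (h : ℝ → ℝ) :
    cint x y h = (∫ u in x..1, h u) + ∫ u in 0..y, h u := if_neg hxy

theorem cint_congr {h₁ h₂ : ℝ → ℝ} (hx : x ≤ 1) (hy : 0 ≤ y) (h : EqOn h₁ h₂ (openArc x y)) :
    cint x y h₁ = cint x y h₂ := by
  unfold cint openArc at *
  split_ifs at * with hxy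
  · exact intervalIntegral.integral_congr_Ioo_of_le hxy h
  · rw [intervalIntegral.integral_congr_Ioo_of_le hx (h.mono subset_union_left),
      intervalIntegral.integral_congr_Ioo_of_le hy (h.mono subset_union_right)]

theorem cint_const_mul (K : ℝ) (h : ℝ → ℝ) : cint x y (fun u => K * h u) = K * cint x y h := by
  unfold cint
  split_ifs <;> simp only [intervalIntegral.integral_const_mul, mul_add]

theorem cint_eq_sub_add (hg : IntervalIntegrable g volume 0 1) (hx : x ∈ Icc 0 1)
    (hy : y ∈ Icc 0 1) :
    cint x y g = (∫ u in 0..y, g u) - (∫ u in 0..x, g u)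
      + if x ≤ y then 0 else ∫ u in 0..1, g u := by
  have h0 : (0 : ℝ) ∈ Icc (0 : ℝ) 1 := left_mem_Icc.2 zero_le_one
  have h1 : (1 : ℝ) ∈ Icc (0 : ℝ) 1 := right_mem_Icc.2 zero_le_one
  unfold cint
  split_ifs
  · linarith [intervalIntegral.integral_add_adjacent_intervals
      (hg.mono_Icc h0 hx) (hg.mono_Icc hx hy)]
  · linarith [intervalIntegral.integral_add_adjacent_intervals
      (hg.mono_Icc h0 hx) (hg.mono_Icc hx h1)]

theorem mem_Icc_of_mem_openArc {u : ℝ} (hx : 0 ≤ x) (hy : y ≤ 1) (hu : u ∈ openArc x y) :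
    u ∈ Icc 0 1 := by
  unfold openArc at hu
  split_ifs at hu
  · exact ⟨by linarith [hu.1], by linarith [hu.2]⟩
  · rcases hu with hu | hu
    · exact ⟨by linarith [hu.1], hu.2.le⟩
    · exact ⟨hu.1.le, by linarith [hu.2]⟩

theorem cint_eq_of_mem_openArc (hg : IntervalIntegrable g volume 0 1) (hx : x ∈ Icc 0 1)
    (hy : y ∈ Icc 0 1) {u : ℝ} (hu : u ∈ openArc x y) :
    cint y u g = cint x u g + (∫ v in 0..1, g v) - cint x y g := by
  have hu01 := mem_Icc_of_mem_openArc hx.1 hy.2 hu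
  rw [cint_eq_sub_add hg hy hu01, cint_eq_sub_add hg hx hu01, cint_eq_sub_add hg hx hy]
  unfold openArc at hu
  split_ifs at hu ⊢ <;> simp only [mem_union, mem_Ioo] at hu <;> grind

theorem cint_mul_const_add_cint (hg : IntervalIntegrable g volume 0 1) (hx : x ∈ Icc 0 1)
    (hy : y ∈ Icc 0 1) (C : ℝ) :
    cint x y (fun u => g u * (C + cint x u g)) = C * cint x y g + cint x y g ^ 2 / 2 := by
  have hprim : ∀ {a b : ℝ}, EqOn (fun u => g u * (C + cint a u g))
      (fun u => g u * (C + ∫ v in a..u, g v)) (Ioo a b) := fun hu => by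
    simp only [cint_of_le hu.1.le]
  by_cases hxy : x ≤ y
  · simp only [cint_of_le hxy]
    rw [intervalIntegral.integral_congr_Ioo_of_le hxy hprim]
    exact integral_mul_const_add_primitive (hg.mono_Icc hx hy) C
  · have hwrap : EqOn (fun u => g u * (C + cint x u g))
        (fun u => g u * ((C + ∫ v in x..1, g v) + ∫ v in 0..u, g v)) (Ioo 0 y) := fun u hu => by
      simp only [cint_of_not_le (by linarith [hu.2] : ¬x ≤ u), add_assoc]
    simp only [cint_of_not_le hxy]
    rw [intervalIntegral.integral_congr_Ioo_of_le hx.2 hprim,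
      intervalIntegral.integral_congr_Ioo_of_le hy.1 hwrap,
      integral_mul_const_add_primitive (hg.mono_Icc hx (right_mem_Icc.2 zero_le_one)),
      integral_mul_const_add_primitive (hg.mono_Icc (left_mem_Icc.2 zero_le_one) hy)]
    ring

end Circle

theorem travel_time_part_solves_integral_equation_general
    (ρ : ℝ) (hρ : ρ ∈ Set.Ioo (0 : ℝ) 1)
    (π : ℝ → ℝ)
    (hπint : (∫ u in (0 : ℝ)..1, π u) = 1)
    (c : ℝ)
    (fα : ℝ → ℝ → ℝ)
    (hfα : ∀ x y : ℝ,
      fα x y = c * π x / (1 - ρ) * cint x y (fun u => ρ * π u + (1 - ρ))) :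
    ∀ x ∈ Set.Icc (0 : ℝ) 1, ∀ y ∈ Set.Icc (0 : ℝ) 1,
      (ρ * π y + (1 - ρ)) * fα x y
        = ρ * cint x y (fun u => (ρ * π u + (1 - ρ)) * (π y * fα x u + π x * fα y u))
          + c * π x * cint x y (fun u => ρ * π u + (1 - ρ)) := by
  intro x hx y hy
  have hπi : IntervalIntegrable π volume 0 1 :=
    intervalIntegral.intervalIntegrable_of_integral_ne_zero (by rw [hπint]; exact one_ne_zero)
  have hgi : IntervalIntegrable (fun u => ρ * π u + (1 - ρ)) volume 0 1 :=
    (hπi.const_mul ρ).add intervalIntegrable_const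
  have hmass : ∫ u in (0 : ℝ)..1, ρ * π u + (1 - ρ) = 1 := by
    rw [intervalIntegral.integral_add (hπi.const_mul ρ) intervalIntegrable_const,
      intervalIntegral.integral_const_mul, hπint, intervalIntegral.integral_const]
    simp
  set D := cint x y (fun u => ρ * π u + (1 - ρ))
  have hintegrand : EqOn
      (fun u => (ρ * π u + (1 - ρ)) * (π y * fα x u + π x * fα y u))
      (fun u => 2 * (c * π x * π y / (1 - ρ)) * ((ρ * π u + (1 - ρ))
        * ((1 - D) / 2 + cint x u (fun v => ρ * π v + (1 - ρ)))))
      (openArc x y) := fun u hu => by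
    simp only [hfα, cint_eq_of_mem_openArc hgi hx hy hu, hmass]
    ring
  have h1ρ : 1 - ρ ≠ 0 := sub_ne_zero.2 hρ.2.ne'
  rw [cint_congr hx.2 hy.1 hintegrand, cint_const_mul, cint_mul_const_add_cint hgi hx hy, hfα]
  field_simp
  ring

/-- The travel-time part `f_α(x,y) = (c·π(x)/(1−ρ))·∫*_{u=x}^{y} [ρπ(u)+1−ρ] du`
solves the circular integral equation with inhomogeneous term
`c·π(x)·∫*_{u=x}^{y} [ρπ(u)+1−ρ] du`. -/
theorem travel_time_part_solves_integral_equation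
    (ρ : ℝ) (hρ : ρ ∈ Set.Ioo (0 : ℝ) 1)
    (π : ℝ → ℝ) (hπmeas : Measurable π)
    (hπnn : ∀ x ∈ Set.Icc (0 : ℝ) 1, 0 ≤ π x)
    (hπbd : ∃ M : ℝ, ∀ x ∈ Set.Icc (0 : ℝ) 1, π x ≤ M)
    (hπint : (∫ u in (0 : ℝ)..1, π u) = 1)
    (c : ℝ) (hc : 0 < c)
    (fα : ℝ → ℝ → ℝ)
    (hfα : ∀ x y : ℝ,
      fα x y = c * π x / (1 - ρ) * cint x y (fun u => ρ * π u + (1 - ρ))) :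
    ∀ x ∈ Set.Icc (0 : ℝ) 1, ∀ y ∈ Set.Icc (0 : ℝ) 1,
      (ρ * π y + (1 - ρ)) * fα x y
        = ρ * cint x y (fun u => (ρ * π u + (1 - ρ)) * (π y * fα x u + π x * fα y u))
          + c * π x * cint x y (fun u => ρ * π u + (1 - ρ)) :=
  travel_time_part_solves_integral_equation_general ρ hρ π hπint c fα hfα
end

section
/- Let ρ ∈ (0,1), let π be a bounded probability density on [0,1], let b : [0,1]² → ℝ be bounded measurable, define Φ(g)(x,y) = ρ·π(y)·∫*_{u=x}^{y} [g(x,u) + g(y,u)] du + b(x,y), let g₀ be bounded measurable and g_{n+1} = Φ(g_n), and let g* be the pointwise limit of (g_n). If δ > 0 and n ≥ 2 are such that sup_{x,y ∈ [0,1]} |g_n(x,y) − g_{n−1}(x,y)| ≤ δ, then for all x, y ∈ [0,1]: |g_n(x,y) − g*(x,y)| ≤ 4·ρ·δ·π(y)/(1−ρ). -/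
open MeasureTheory

/-!
Write `Φ g = K g + b` with `K` linear and positive. The successive differences
`d_k = g_{n+k} - g_{n+k-1}` satisfy `d_{k+1} = K d_k`, hence `|d_{k+1}| ≤ K |d_k|`. From
`|d_0| ≤ δ` one gets `|d_1| ≤ 2ρδπ(y)` and `|d_2| ≤ 4ρ²δ E` with `E(x,y) = π(y) ∫*_{u=x}^{y} π`.
The key point is `K E = ρ E`: on each piece of the arc from `x` to `y`, the function
`u ↦ ∫*_x^u π + ∫*_y^u π` equals `2P(u) + κ` with `κ` constant and `P` the primitive of `π`,
and `∫ π (2P + κ)` is read off at the endpoints because `P` is absolutely continuous.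
Since `E ≤ π(y)`, this gives `|d_{k+1}| ≤ 4ρ^{k+1}δπ(y)`, and the geometric series bounds
`|g_n - g*|`.
-/

open Set

theorem intervalIntegral.integral_mul_primitive {f : ℝ → ℝ} {a b : ℝ}
    (hf : IntervalIntegrable f volume a b) :
    ∫ u in a..b, f u * ∫ t in a..u, f t = (∫ t in a..b, f t) ^ 2 / 2 := by
  have hF := hf.absolutelyContinuousOnInterval_intervalIntegral left_mem_uIcc
  have hFTC := hF.integral_deriv_mul_eq_sub hF
  have hderiv : ∀ᵐ x, x ∈ uIoc a b →
      deriv (fun x => ∫ t in a..x, f t) x * (∫ t in a..x, f t)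
        + (∫ t in a..x, f t) * deriv (fun x => ∫ t in a..x, f t) x
        = 2 * (f x * ∫ t in a..x, f t) := by
    filter_upwards [hf.ae_hasDerivAt_integral] with x hx hxab
    rw [(hx (uIoc_subset_uIcc hxab) a left_mem_uIcc).deriv]
    ring
  rw [intervalIntegral.integral_congr_ae hderiv, intervalIntegral.integral_const_mul,
    intervalIntegral.integral_same, mul_zero, sub_zero] at hFTC
  linarith

theorem integrableOn_Icc_of_abs_le {f : ℝ → ℝ} {a b M : ℝ} (hf : Measurable f)
    (hM : ∀ u ∈ Icc a b, |f u| ≤ M) : IntegrableOn f (Icc a b) :=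
  Measure.integrableOn_of_bounded measure_Icc_lt_top.ne hf.aestronglyMeasurable
    ((ae_restrict_iff' measurableSet_Icc).2 (.of_forall hM))

theorem measurable_setIntegral_Ioc {α : Type*} [MeasurableSpace α] {H : α → ℝ → ℝ}
    (hH : Measurable (Function.uncurry H)) {a c : α → ℝ} (ha : Measurable a)
    (hc : Measurable c) : Measurable fun p => ∫ u in Ioc (a p) (c p), H p u := by
  have hS : MeasurableSet {q : α × ℝ | q.2 ∈ Ioc (a q.1) (c q.1)} :=
    (measurableSet_lt (ha.comp measurable_fst) measurable_snd).inter
      (measurableSet_le measurable_snd (hc.comp measurable_fst))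
  simp_rw [← integral_indicator measurableSet_Ioc]
  exact ((hH.indicator hS).stronglyMeasurable.integral_prod_right').measurable

theorem measurable_cint {H : ℝ × ℝ → ℝ → ℝ} (hH : Measurable (Function.uncurry H)) :
    Measurable fun p : ℝ × ℝ => cint p.1 p.2 (H p) := by
  have hint {a c : ℝ × ℝ → ℝ} (ha : Measurable a) (hc : Measurable c) :
      Measurable fun p => ∫ u in a p..c p, H p u :=
    (measurable_setIntegral_Ioc hH ha hc).sub (measurable_setIntegral_Ioc hH hc ha)
  exact Measurable.ite (measurableSet_le measurable_fst measurable_snd)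
    (hint measurable_fst measurable_snd)
    ((hint measurable_fst measurable_const).add (hint measurable_const measurable_snd))

section CircularIntegral

variable {a b : ℝ} {f g : ℝ → ℝ}

theorem cint_of_le_s5 (h : a ≤ b) (f : ℝ → ℝ) : cint a b f = ∫ u in a..b, f u := if_pos h

theorem cint_of_lt (h : b < a) (f : ℝ → ℝ) :
    cint a b f = (∫ u in a..1, f u) + ∫ u in (0 : ℝ)..b, f u := if_neg h.not_ge

theorem cint_const_mul_s5 (c : ℝ) (f : ℝ → ℝ) :
    cint a b (fun u => c * f u) = c * cint a b f := by
  unfold cint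
  split_ifs <;> simp only [intervalIntegral.integral_const_mul, mul_add]

def circArc (a b : ℝ) : Set ℝ := if a ≤ b then Ioc a b else Ioc a 1 ∪ Ioc 0 b

theorem measurableSet_circArc : MeasurableSet (circArc a b) := by
  unfold circArc; split_ifs <;> measurability

theorem circArc_subset (ha : a ∈ Icc (0 : ℝ) 1) (hb : b ∈ Icc (0 : ℝ) 1) :
    circArc a b ⊆ Icc 0 1 := by
  unfold circArc
  split_ifs
  · exact Ioc_subset_Icc_self.trans (Icc_subset_Icc ha.1 hb.2)
  · exact union_subset (Ioc_subset_Icc_self.trans (Icc_subset_Icc ha.1 le_rfl))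
      (Ioc_subset_Icc_self.trans (Icc_subset_Icc le_rfl hb.2))

theorem cint_eq_setIntegral (hf : IntegrableOn f (Icc 0 1)) (ha : a ∈ Icc (0 : ℝ) 1)
    (hb : b ∈ Icc (0 : ℝ) 1) : cint a b f = ∫ u in circArc a b, f u := by
  unfold cint circArc
  split_ifs with h
  · exact intervalIntegral.integral_of_le h
  · rw [intervalIntegral.integral_of_le ha.2, intervalIntegral.integral_of_le hb.1,
      setIntegral_union (Ioc_disjoint_Ioc_of_le (not_le.1 h).le).symm measurableSet_Ioc
        (hf.mono_set (Ioc_subset_Icc_self.trans (Icc_subset_Icc ha.1 le_rfl)))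
        (hf.mono_set (Ioc_subset_Icc_self.trans (Icc_subset_Icc le_rfl hb.2)))]

variable (ha : a ∈ Icc (0 : ℝ) 1) (hb : b ∈ Icc (0 : ℝ) 1)
include ha hb

theorem cint_sub (hf : IntegrableOn f (Icc 0 1)) (hg : IntegrableOn g (Icc 0 1)) :
    cint a b (fun u => f u - g u) = cint a b f - cint a b g := by
  have hsub := circArc_subset ha hb
  rw [cint_eq_setIntegral hf ha hb, cint_eq_setIntegral hg ha hb,
    cint_eq_setIntegral (f := fun u => f u - g u) (hf.sub hg) ha hb,
    integral_sub (hf.mono_set hsub) (hg.mono_set hsub)]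

theorem abs_cint_le (hf : IntegrableOn f (Icc 0 1)) (hg : IntegrableOn g (Icc 0 1))
    (hfg : ∀ u ∈ Icc (0 : ℝ) 1, |f u| ≤ g u) : |cint a b f| ≤ cint a b g := by
  rw [cint_eq_setIntegral hf ha hb, cint_eq_setIntegral hg ha hb]
  refine norm_integral_le_of_norm_le (f := f) (hg.mono_set (circArc_subset ha hb))
    ((ae_restrict_iff' measurableSet_circArc).2 (.of_forall fun u hu => ?_))
  exact (Real.norm_eq_abs (f u)).trans_le (hfg u (circArc_subset ha hb hu))

theorem cint_nonneg (hf : IntegrableOn f (Icc 0 1)) (hf0 : ∀ u ∈ Icc (0 : ℝ) 1, 0 ≤ f u) :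
    0 ≤ cint a b f := by
  rw [cint_eq_setIntegral hf ha hb]
  exact setIntegral_nonneg measurableSet_circArc fun u hu => hf0 u (circArc_subset ha hb hu)

theorem cint_le_integral (hf : IntegrableOn f (Icc 0 1))
    (hf0 : ∀ u ∈ Icc (0 : ℝ) 1, 0 ≤ f u) : cint a b f ≤ ∫ u in (0 : ℝ)..1, f u := by
  rw [intervalIntegral.integral_of_le zero_le_one, ← integral_Icc_eq_integral_Ioc,
    cint_eq_setIntegral hf ha hb]
  exact setIntegral_mono_set hf ((ae_restrict_iff' measurableSet_Icc).2 (.of_forall hf0))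
    (circArc_subset ha hb).eventuallyLE

theorem abs_cint_le_of_abs_le (hf : IntegrableOn f (Icc 0 1)) {C : ℝ}
    (hC : ∀ u ∈ Icc (0 : ℝ) 1, |f u| ≤ C) : |cint a b f| ≤ C := by
  have hC0 : 0 ≤ C := (abs_nonneg _).trans (hC 0 (left_mem_Icc.2 zero_le_one))
  have hconst : IntegrableOn (fun _ => C) (Icc (0 : ℝ) 1) :=
    integrableOn_const measure_Icc_lt_top.ne
  calc |cint a b f| ≤ cint a b (fun _ => C) := abs_cint_le ha hb hf hconst hC
    _ ≤ ∫ _ in (0 : ℝ)..1, C := cint_le_integral ha hb hconst fun _ _ => hC0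
    _ = C := by simp

end CircularIntegral

section Primitive

variable {f : ℝ → ℝ} {a b : ℝ}

theorem cint_eq_primitive (hf : IntegrableOn f (Icc 0 1)) (ha : a ∈ Icc (0 : ℝ) 1)
    (hb : b ∈ Icc (0 : ℝ) 1) :
    cint a b f = (∫ u in (0 : ℝ)..b, f u) - (∫ u in (0 : ℝ)..a, f u)
      + if a ≤ b then 0 else ∫ u in (0 : ℝ)..1, f u := by
  have h0 : (0 : ℝ) ∈ Icc (0 : ℝ) 1 := left_mem_Icc.2 zero_le_one
  have h1 : (1 : ℝ) ∈ Icc (0 : ℝ) 1 := right_mem_Icc.2 zero_le_one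
  have hii {p q : ℝ} (hp : p ∈ Icc (0 : ℝ) 1) (hq : q ∈ Icc (0 : ℝ) 1) :
      IntervalIntegrable f volume p q :=
    (hf.mono_set (uIcc_subset_Icc hp hq)).intervalIntegrable
  rcases le_or_gt a b with hab | hba
  · rw [cint_of_le_s5 hab, if_pos hab, add_zero,
      intervalIntegral.integral_interval_sub_left (hii h0 hb) (hii h0 ha)]
  · rw [cint_of_lt hba, if_neg hba.not_ge,
      ← intervalIntegral.integral_interval_sub_left (hii h0 h1) (hii h0 ha)]
    ring

theorem integral_mul_two_primitive_add (hf : IntegrableOn f (Icc 0 1))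
    (ha : a ∈ Icc (0 : ℝ) 1) (hb : b ∈ Icc (0 : ℝ) 1) (κ : ℝ) :
    ∫ u in a..b, f u * (2 * (∫ t in (0 : ℝ)..u, f t) + κ)
      = (∫ t in (0 : ℝ)..b, f t) ^ 2 - (∫ t in (0 : ℝ)..a, f t) ^ 2
        + κ * ((∫ t in (0 : ℝ)..b, f t) - ∫ t in (0 : ℝ)..a, f t) := by
  have h0 : (0 : ℝ) ∈ Icc (0 : ℝ) 1 := left_mem_Icc.2 zero_le_one
  have hii {p q : ℝ} (hp : p ∈ Icc (0 : ℝ) 1) (hq : q ∈ Icc (0 : ℝ) 1) :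
      IntervalIntegrable f volume p q :=
    (hf.mono_set (uIcc_subset_Icc hp hq)).intervalIntegrable
  have hab := hii ha hb
  have hsplit : EqOn (fun u => f u * (2 * (∫ t in (0 : ℝ)..u, f t) + κ))
      (fun u => (2 * (∫ t in (0 : ℝ)..a, f t) + κ) * f u + 2 * (f u * ∫ t in a..u, f t))
      (uIcc a b) := fun u hu => by
    have hu := uIcc_subset_Icc ha hb hu
    simp only
    rw [← intervalIntegral.integral_add_adjacent_intervals (hii h0 ha) (hii ha hu)]
    ring
  have hprim : IntervalIntegrable (fun u => f u * ∫ t in a..u, f t) volume a b :=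
    hab.mul_continuousOn (intervalIntegral.continuousOn_primitive_interval' hab left_mem_uIcc)
  rw [intervalIntegral.integral_congr hsplit,
    intervalIntegral.integral_add (hab.const_mul _) (hprim.const_mul 2),
    intervalIntegral.integral_const_mul, intervalIntegral.integral_const_mul,
    intervalIntegral.integral_mul_primitive hab,
    ← intervalIntegral.integral_interval_sub_left (hii h0 hb) (hii h0 ha)]
  ring

end Primitive

theorem cint_mul_cint_add_cint {π : ℝ → ℝ} (hπ : IntegrableOn π (Icc 0 1))
    (hπ1 : ∫ u in (0 : ℝ)..1, π u = 1) {x y : ℝ} (hx : x ∈ Icc (0 : ℝ) 1)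
    (hy : y ∈ Icc (0 : ℝ) 1) :
    cint x y (fun u => π u * (cint x u π + cint y u π)) = cint x y π := by
  set P : ℝ → ℝ := fun t => ∫ u in (0 : ℝ)..t, π u
  have hC {a u : ℝ} (ha : a ∈ Icc (0 : ℝ) 1) (hu : u ∈ Icc (0 : ℝ) 1) :
      cint a u π = P u - P a + if a ≤ u then 0 else 1 := by
    rw [cint_eq_primitive hπ ha hu, hπ1]
  have hQ {a b : ℝ} (ha : a ∈ Icc (0 : ℝ) 1) (hb : b ∈ Icc (0 : ℝ) 1) (κ : ℝ) :
      ∫ u in a..b, π u * (2 * P u + κ) = P b ^ 2 - P a ^ 2 + κ * (P b - P a) :=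
    integral_mul_two_primitive_add hπ ha hb κ
  have h0 : (0 : ℝ) ∈ Icc (0 : ℝ) 1 := left_mem_Icc.2 zero_le_one
  have h1 : (1 : ℝ) ∈ Icc (0 : ℝ) 1 := right_mem_Icc.2 zero_le_one
  have hP0 : P 0 = 0 := intervalIntegral.integral_same
  have hP1 : P 1 = 1 := hπ1
  have hne : ∀ᵐ u, u ≠ y := by simp [ae_iff, measure_singleton]
  rcases le_or_gt x y with hxy | hyx
  · have hint : ∫ u in x..y, π u * (cint x u π + cint y u π)
        = ∫ u in x..y, π u * (2 * P u + (1 - P x - P y)) := by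
      refine intervalIntegral.integral_congr_ae ?_
      filter_upwards [hne] with u huy hu
      rw [uIoc_of_le hxy] at hu
      have hu01 : u ∈ Icc (0 : ℝ) 1 := ⟨hx.1.trans hu.1.le, hu.2.trans hy.2⟩
      rw [hC hx hu01, hC hy hu01, if_pos hu.1.le, if_neg (fun h => huy (le_antisymm hu.2 h))]
      ring
    rw [cint_of_le_s5 hxy, cint_of_le_s5 hxy, hint, hQ hx hy,
      ← cint_of_le_s5 hxy, hC hx hy, if_pos hxy]
    ring
  · have hint₁ : ∫ u in x..1, π u * (cint x u π + cint y u π)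
        = ∫ u in x..1, π u * (2 * P u + (- P x - P y)) := by
      refine intervalIntegral.integral_congr fun u hu => ?_
      rw [uIcc_of_le hx.2] at hu
      have hu01 : u ∈ Icc (0 : ℝ) 1 := ⟨hx.1.trans hu.1, hu.2⟩
      rw [hC hx hu01, hC hy hu01, if_pos hu.1, if_pos (hyx.le.trans hu.1)]
      ring
    have hint₂ : ∫ u in (0 : ℝ)..y, π u * (cint x u π + cint y u π)
        = ∫ u in (0 : ℝ)..y, π u * (2 * P u + (2 - P x - P y)) := by
      refine intervalIntegral.integral_congr_ae ?_
      filter_upwards [hne] with u huy hu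
      rw [uIoc_of_le hy.1] at hu
      have hu01 : u ∈ Icc (0 : ℝ) 1 := ⟨hu.1.le, hu.2.trans hy.2⟩
      rw [hC hx hu01, hC hy hu01, if_neg (hu.2.trans_lt hyx).not_ge,
        if_neg (fun h => huy (le_antisymm hu.2 h))]
      ring
    rw [cint_of_lt hyx, cint_of_lt hyx, hint₁, hint₂, hQ hx h1, hQ h0 hy,
      ← cint_of_lt hyx, hC hx hy, if_neg hyx.not_ge, hP0, hP1]
    ring

/-- The linear part of the substitution map `Φ`, so that `Φ g = circKernel ρ π g + b`. -/
noncomputable def circKernel (ρ : ℝ) (π : ℝ → ℝ) (f : ℝ → ℝ → ℝ) (x y : ℝ) : ℝ :=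
  ρ * π y * cint x y (fun u => f x u + f y u)

section CircKernel

variable {ρ : ℝ} {π : ℝ → ℝ} {f g : ℝ → ℝ → ℝ} {x y : ℝ}

theorem measurable_circKernel (hπ : Measurable π) (hf : Measurable (Function.uncurry f)) :
    Measurable (Function.uncurry (circKernel ρ π f)) := by
  refine (measurable_const.mul (hπ.comp measurable_snd)).mul
    (measurable_cint (H := fun p u => f p.1 u + f p.2 u) ?_)
  exact (hf.comp ((measurable_fst.comp measurable_fst).prodMk measurable_snd)).add
    (hf.comp ((measurable_snd.comp measurable_fst).prodMk measurable_snd))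

variable (hx : x ∈ Icc (0 : ℝ) 1) (hy : y ∈ Icc (0 : ℝ) 1)
include hx hy

theorem circKernel_sub (hf : ∀ x ∈ Icc (0 : ℝ) 1, IntegrableOn (f x) (Icc 0 1))
    (hg : ∀ x ∈ Icc (0 : ℝ) 1, IntegrableOn (g x) (Icc 0 1)) :
    circKernel ρ π f x y - circKernel ρ π g x y = circKernel ρ π (f - g) x y := by
  simp only [circKernel, Pi.sub_apply]
  rw [← mul_sub, ← cint_sub (f := fun u => f x u + f y u) (g := fun u => g x u + g y u) hx hy
    ((hf x hx).add (hf y hy)) ((hg x hx).add (hg y hy))]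
  congr 2
  funext u
  ring

theorem abs_circKernel_le (hρ : 0 ≤ ρ) (hπy : 0 ≤ π y) {β : ℝ → ℝ → ℝ}
    (hf : ∀ x ∈ Icc (0 : ℝ) 1, IntegrableOn (f x) (Icc 0 1))
    (hβ : ∀ x ∈ Icc (0 : ℝ) 1, IntegrableOn (β x) (Icc 0 1))
    (hfβ : ∀ x ∈ Icc (0 : ℝ) 1, ∀ u ∈ Icc (0 : ℝ) 1, |f x u| ≤ β x u) :
    |circKernel ρ π f x y| ≤ circKernel ρ π β x y := by
  rw [circKernel, circKernel, abs_mul, abs_of_nonneg (mul_nonneg hρ hπy)]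
  refine mul_le_mul_of_nonneg_left (abs_cint_le hx hy ((hf x hx).add (hf y hy))
    ((hβ x hx).add (hβ y hy)) fun u hu => ?_) (mul_nonneg hρ hπy)
  exact (abs_add_le _ _).trans (add_le_add (hfβ x hx u hu) (hfβ y hy u hu))

theorem circKernel_const_le (hρ : 0 ≤ ρ) (hπy : 0 ≤ π y) {c : ℝ} (hc : 0 ≤ c) :
    circKernel ρ π (fun _ _ => c) x y ≤ 2 * c * ρ * π y := by
  have hcint : cint x y (fun _ => c + c) ≤ 2 * c :=
    (le_abs_self _).trans (abs_cint_le_of_abs_le hx hy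
      (integrableOn_const measure_Icc_lt_top.ne) fun _ _ => by
        rw [abs_of_nonneg (by linarith)]; linarith)
  calc circKernel ρ π (fun _ _ => c) x y = ρ * π y * cint x y (fun _ => c + c) := rfl
    _ ≤ ρ * π y * (2 * c) := mul_le_mul_of_nonneg_left hcint (mul_nonneg hρ hπy)
    _ = 2 * c * ρ * π y := by ring

end CircKernel

section Density

variable {π : ℝ → ℝ} {x y : ℝ}

theorem cint_mem_Icc (hπ : IntegrableOn π (Icc 0 1)) (hπ0 : ∀ u ∈ Icc (0 : ℝ) 1, 0 ≤ π u)
    (hπ1 : ∫ u in (0 : ℝ)..1, π u = 1) (hx : x ∈ Icc (0 : ℝ) 1) (hy : y ∈ Icc (0 : ℝ) 1) :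
    cint x y π ∈ Icc (0 : ℝ) 1 :=
  ⟨cint_nonneg hx hy hπ hπ0, hπ1 ▸ cint_le_integral hx hy hπ hπ0⟩

theorem integrableOn_mul_cint {M : ℝ} (hπ : Measurable π) (hπ0 : ∀ u ∈ Icc (0 : ℝ) 1, 0 ≤ π u)
    (hπM : ∀ u ∈ Icc (0 : ℝ) 1, π u ≤ M) (hπ1 : ∫ u in (0 : ℝ)..1, π u = 1)
    (hx : x ∈ Icc (0 : ℝ) 1) : IntegrableOn (fun u => π u * cint x u π) (Icc 0 1) := by
  have hπI : IntegrableOn π (Icc 0 1) :=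
    integrableOn_Icc_of_abs_le hπ fun u hu => (abs_of_nonneg (hπ0 u hu)).trans_le (hπM u hu)
  refine integrableOn_Icc_of_abs_le (M := M) (hπ.mul ((measurable_cint (H := fun _ u => π u)
    (hπ.comp measurable_snd)).comp (measurable_const.prodMk measurable_id))) fun u hu => ?_
  obtain ⟨hC0, hC1⟩ := cint_mem_Icc hπI hπ0 hπ1 hx hu
  rw [abs_of_nonneg (mul_nonneg (hπ0 u hu) hC0)]
  nlinarith [hπ0 u hu, hπM u hu]

variable {ρ : ℝ} (c : ℝ)

theorem circKernel_density : circKernel ρ π (fun _ u => c * π u) x y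
    = 2 * ρ * (c * (π y * cint x y π)) := by
  have hlin : (fun u => c * π u + c * π u) = fun u => (2 * c) * π u := by
    funext u; ring
  rw [circKernel, hlin, cint_const_mul_s5]
  ring

theorem circKernel_eigen (hπ : IntegrableOn π (Icc 0 1)) (hπ1 : ∫ u in (0 : ℝ)..1, π u = 1)
    (hx : x ∈ Icc (0 : ℝ) 1) (hy : y ∈ Icc (0 : ℝ) 1) :
    circKernel ρ π (fun x u => c * (π u * cint x u π)) x y = ρ * (c * (π y * cint x y π)) := by
  have hlin : (fun u => c * (π u * cint x u π) + c * (π u * cint y u π))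
      = fun u => c * (π u * (cint x u π + cint y u π)) := by
    funext u; ring
  rw [circKernel, hlin, cint_const_mul_s5, cint_mul_cint_add_cint hπ hπ1 hx hy]
  ring

end Density

theorem abs_circKernel_iterate_le {ρ M δ : ℝ} {π : ℝ → ℝ} (hρ : 0 ≤ ρ) (hπ : Measurable π)
    (hπ0 : ∀ u ∈ Icc (0 : ℝ) 1, 0 ≤ π u) (hπM : ∀ u ∈ Icc (0 : ℝ) 1, π u ≤ M)
    (hπ1 : ∫ u in (0 : ℝ)..1, π u = 1) {D : ℕ → ℝ → ℝ → ℝ}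
    (hD : ∀ k, ∀ x ∈ Icc (0 : ℝ) 1, IntegrableOn (D k x) (Icc 0 1))
    (hDsucc : ∀ k, ∀ x ∈ Icc (0 : ℝ) 1, ∀ y ∈ Icc (0 : ℝ) 1,
      D (k + 1) x y = circKernel ρ π (D k) x y)
    (hD0 : ∀ x ∈ Icc (0 : ℝ) 1, ∀ y ∈ Icc (0 : ℝ) 1, |D 0 x y| ≤ δ)
    (k : ℕ) {x y : ℝ} (hx : x ∈ Icc (0 : ℝ) 1) (hy : y ∈ Icc (0 : ℝ) 1) :
    |D (k + 1) x y| ≤ 4 * ρ * δ * π y * ρ ^ k := by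
  have hπI : IntegrableOn π (Icc 0 1) :=
    integrableOn_Icc_of_abs_le hπ fun u hu => (abs_of_nonneg (hπ0 u hu)).trans_le (hπM u hu)
  have h0 : (0 : ℝ) ∈ Icc (0 : ℝ) 1 := left_mem_Icc.2 zero_le_one
  have hδ : 0 ≤ δ := (abs_nonneg _).trans (hD0 0 h0 0 h0)
  have hD1 : ∀ x ∈ Icc (0 : ℝ) 1, ∀ y ∈ Icc (0 : ℝ) 1, |D 1 x y| ≤ 2 * δ * ρ * π y :=
    fun x hx y hy => by
      rw [hDsucc 0 x hx y hy]
      exact (abs_circKernel_le hx hy hρ (hπ0 y hy) (hD 0) (fun _ _ => integrableOn_const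
        measure_Icc_lt_top.ne) hD0).trans (circKernel_const_le hx hy hρ (hπ0 y hy) hδ)
  have hD2 : ∀ k, ∀ x ∈ Icc (0 : ℝ) 1, ∀ y ∈ Icc (0 : ℝ) 1,
      |D (k + 2) x y| ≤ 4 * δ * ρ ^ (k + 2) * (π y * cint x y π) := by
    intro k
    induction k with
    | zero =>
      intro x hx y hy
      rw [hDsucc 1 x hx y hy]
      refine (abs_circKernel_le (β := fun _ u => 2 * δ * ρ * π u) hx hy hρ (hπ0 y hy) (hD 1)
        (fun _ _ => hπI.const_mul _) hD1).trans_eq ?_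
      rw [circKernel_density]
      ring
    | succ k ih =>
      intro x hx y hy
      rw [hDsucc (k + 2) x hx y hy]
      refine (abs_circKernel_le hx hy hρ (hπ0 y hy) (hD (k + 2))
        (fun x hx => (integrableOn_mul_cint hπ hπ0 hπM hπ1 hx).const_mul _) ih).trans_eq ?_
      rw [circKernel_eigen _ hπI hπ1 hx hy]
      ring
  have hπy := hπ0 y hy
  rcases k with _ | k
  · nlinarith [hD1 x hx y hy, mul_nonneg (mul_nonneg hδ hρ) hπy]
  · have hC1 := (cint_mem_Icc hπI hπ0 hπ1 hx hy).2
    calc |D (k + 1 + 1) x y| ≤ 4 * δ * ρ ^ (k + 2) * (π y * cint x y π) := hD2 k x hx y hy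
      _ ≤ 4 * δ * ρ ^ (k + 2) * (π y * 1) := by gcongr
      _ = 4 * ρ * δ * π y * ρ ^ (k + 1) := by ring

def IsBoundedMeasurableOnSquare (f : ℝ → ℝ → ℝ) : Prop :=
  Measurable (Function.uncurry f) ∧
    ∃ M : ℝ, ∀ x ∈ Icc (0 : ℝ) 1, ∀ y ∈ Icc (0 : ℝ) 1, |f x y| ≤ M

namespace IsBoundedMeasurableOnSquare

variable {f : ℝ → ℝ → ℝ}

theorem integrableOn (hf : IsBoundedMeasurableOnSquare f) {x : ℝ} (hx : x ∈ Icc (0 : ℝ) 1) :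
    IntegrableOn (f x) (Icc 0 1) :=
  integrableOn_Icc_of_abs_le (hf.1.comp (measurable_const.prodMk measurable_id))
    (hf.2.choose_spec x hx)

theorem circKernel_add {ρ M : ℝ} {π : ℝ → ℝ} {b : ℝ → ℝ → ℝ} (hπ : Measurable π)
    (hπM : ∀ y ∈ Icc (0 : ℝ) 1, |π y| ≤ M) (hf : IsBoundedMeasurableOnSquare f)
    (hb : IsBoundedMeasurableOnSquare b) :
    IsBoundedMeasurableOnSquare (fun x y => circKernel ρ π f x y + b x y) := by
  obtain ⟨B, hB⟩ := hf.2
  obtain ⟨Mb, hMb⟩ := hb.2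
  refine ⟨(measurable_circKernel hπ hf.1).add hb.1, |ρ| * M * (2 * B) + Mb, fun x hx y hy => ?_⟩
  have hcint : |cint x y (fun u => f x u + f y u)| ≤ 2 * B :=
    abs_cint_le_of_abs_le hx hy ((hf.integrableOn hx).add (hf.integrableOn hy)) fun u hu =>
      (abs_add_le _ _).trans (by linarith [hB x hx u hu, hB y hy u hu])
  calc |circKernel ρ π f x y + b x y|
        ≤ |ρ| * |π y| * |cint x y (fun u => f x u + f y u)| + |b x y| := by
        rw [circKernel, ← abs_mul, ← abs_mul]
        exact abs_add_le _ _
    _ ≤ |ρ| * M * (2 * B) + Mb := by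
        gcongr
        · exact mul_nonneg (abs_nonneg ρ) ((abs_nonneg _).trans (hπM y hy))
        · exact hπM y hy
        · exact hMb x hx y hy

end IsBoundedMeasurableOnSquare

section Iteration

variable {ρ : ℝ} {π : ℝ → ℝ} {b : ℝ → ℝ → ℝ} {g : ℕ → ℝ → ℝ → ℝ}

theorem isBoundedMeasurableOnSquare_iterate {M : ℝ} (hπ : Measurable π)
    (hπM : ∀ y ∈ Icc (0 : ℝ) 1, |π y| ≤ M) (hb : IsBoundedMeasurableOnSquare b)
    (hg0 : IsBoundedMeasurableOnSquare (g 0))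
    (hrec : ∀ m x y, g (m + 1) x y = circKernel ρ π (g m) x y + b x y) (m : ℕ) :
    IsBoundedMeasurableOnSquare (g m) := by
  induction m with
  | zero => exact hg0
  | succ m ih =>
    rw [show g (m + 1) = fun x y => circKernel ρ π (g m) x y + b x y from
      funext fun x => funext fun y => hrec m x y]
    exact ih.circKernel_add hπ hπM hb

theorem iterate_succ_sub_eq_circKernel (hg : ∀ m, IsBoundedMeasurableOnSquare (g m))
    (hrec : ∀ m x y, g (m + 1) x y = circKernel ρ π (g m) x y + b x y) (m : ℕ) {x y : ℝ}
    (hx : x ∈ Icc (0 : ℝ) 1) (hy : y ∈ Icc (0 : ℝ) 1) :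
    g (m + 2) x y - g (m + 1) x y = circKernel ρ π (g (m + 1) - g m) x y := by
  rw [hrec (m + 1) x y, hrec m x y, add_sub_add_right_eq_sub]
  exact circKernel_sub hx hy (fun x hx => (hg _).integrableOn hx)
    (fun x hx => (hg _).integrableOn hx)

end Iteration

theorem successive_substitution_error_bound_general
    (ρ : ℝ) (hρ : ρ ∈ Set.Ioo (0 : ℝ) 1)
    (π : ℝ → ℝ) (hπmeas : Measurable π)
    (hπnn : ∀ x ∈ Set.Icc (0 : ℝ) 1, 0 ≤ π x)
    (hπbd : ∃ M : ℝ, ∀ x ∈ Set.Icc (0 : ℝ) 1, π x ≤ M)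
    (hπint : (∫ u in (0 : ℝ)..1, π u) = 1)
    (b : ℝ → ℝ → ℝ)
    (hbmeas : Measurable (Function.uncurry b))
    (hbbd : ∃ M : ℝ, ∀ x ∈ Set.Icc (0 : ℝ) 1, ∀ y ∈ Set.Icc (0 : ℝ) 1, |b x y| ≤ M)
    (g : ℕ → ℝ → ℝ → ℝ)
    (hg0meas : Measurable (Function.uncurry (g 0)))
    (hg0bd : ∃ M : ℝ, ∀ x ∈ Set.Icc (0 : ℝ) 1, ∀ y ∈ Set.Icc (0 : ℝ) 1, |g 0 x y| ≤ M)
    (hgrec : ∀ (n : ℕ) (x y : ℝ),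
      g (n + 1) x y = ρ * π y * cint x y (fun u => g n x u + g n y u) + b x y)
    (gstar : ℝ → ℝ → ℝ)
    (hgstar : ∀ x ∈ Set.Icc (0 : ℝ) 1, ∀ y ∈ Set.Icc (0 : ℝ) 1,
      Filter.Tendsto (fun n => g n x y) Filter.atTop (nhds (gstar x y)))
    (δ : ℝ)
    (n : ℕ) (hn : 2 ≤ n)
    (hstop : ∀ x ∈ Set.Icc (0 : ℝ) 1, ∀ y ∈ Set.Icc (0 : ℝ) 1,
      |g n x y - g (n - 1) x y| ≤ δ) :
    ∀ x ∈ Set.Icc (0 : ℝ) 1, ∀ y ∈ Set.Icc (0 : ℝ) 1,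
      |g n x y - gstar x y| ≤ 4 * ρ * δ * π y / (1 - ρ) := by
  intro x hx y hy
  obtain ⟨M, hM⟩ := hπbd
  have hg := isBoundedMeasurableOnSquare_iterate hπmeas
    (fun y hy => (abs_of_nonneg (hπnn y hy)).trans_le (hM y hy)) ⟨hbmeas, hbbd⟩
    ⟨hg0meas, hg0bd⟩ hgrec
  obtain ⟨m, rfl⟩ : ∃ m, n = m + 1 := ⟨n - 1, by omega⟩
  have hstep := abs_circKernel_iterate_le (D := fun k => g (m + k + 1) - g (m + k)) hρ.1.le
    hπmeas hπnn hM hπint (fun k x hx => ((hg _).integrableOn hx).sub ((hg _).integrableOn hx))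
    (fun k x hx y hy => iterate_succ_sub_eq_circKernel hg hgrec (m + k) hx hy)
    (by simpa using hstop)
  have hlim : Filter.Tendsto (fun j => g (j + (m + 1)) x y) Filter.atTop (nhds (gstar x y)) :=
    (Filter.tendsto_add_atTop_iff_nat (m + 1)).2 (hgstar x hx y hy)
  have hgeom (j : ℕ) :
      dist (g (j + (m + 1)) x y) (g (j + 1 + (m + 1)) x y) ≤ 4 * ρ * δ * π y * ρ ^ j := by
    rw [dist_comm, Real.dist_eq]
    simpa [add_comm, add_left_comm, add_assoc] using hstep j hx hy
  simpa [Real.dist_eq] using dist_le_of_le_geometric_of_tendsto₀ ρ _ hρ.2 hgeom hlim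

/-- Error bound for the successive-substitution iteration: if it is stopped at
step `n ≥ 2` with `sup |g_n − g_{n−1}| ≤ δ`, then the distance to the pointwise
limit `g*` satisfies `|g_n(x,y) − g*(x,y)| ≤ 4ρδπ(y)/(1−ρ)` on `[0,1]²`. -/
theorem successive_substitution_error_bound
    (ρ : ℝ) (hρ : ρ ∈ Set.Ioo (0 : ℝ) 1)
    (π : ℝ → ℝ) (hπmeas : Measurable π)
    (hπnn : ∀ x ∈ Set.Icc (0 : ℝ) 1, 0 ≤ π x)
    (hπbd : ∃ M : ℝ, ∀ x ∈ Set.Icc (0 : ℝ) 1, π x ≤ M)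
    (hπint : (∫ u in (0 : ℝ)..1, π u) = 1)
    (b : ℝ → ℝ → ℝ)
    (hbmeas : Measurable (Function.uncurry b))
    (hbbd : ∃ M : ℝ, ∀ x ∈ Set.Icc (0 : ℝ) 1, ∀ y ∈ Set.Icc (0 : ℝ) 1, |b x y| ≤ M)
    (g : ℕ → ℝ → ℝ → ℝ)
    (hg0meas : Measurable (Function.uncurry (g 0)))
    (hg0bd : ∃ M : ℝ, ∀ x ∈ Set.Icc (0 : ℝ) 1, ∀ y ∈ Set.Icc (0 : ℝ) 1, |g 0 x y| ≤ M)
    (hgrec : ∀ (n : ℕ) (x y : ℝ),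
      g (n + 1) x y = ρ * π y * cint x y (fun u => g n x u + g n y u) + b x y)
    (gstar : ℝ → ℝ → ℝ)
    (hgstar : ∀ x ∈ Set.Icc (0 : ℝ) 1, ∀ y ∈ Set.Icc (0 : ℝ) 1,
      Filter.Tendsto (fun n => g n x y) Filter.atTop (nhds (gstar x y)))
    (δ : ℝ) (hδ : 0 < δ)
    (n : ℕ) (hn : 2 ≤ n)
    (hstop : ∀ x ∈ Set.Icc (0 : ℝ) 1, ∀ y ∈ Set.Icc (0 : ℝ) 1,
      |g n x y - g (n - 1) x y| ≤ δ) :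
    ∀ x ∈ Set.Icc (0 : ℝ) 1, ∀ y ∈ Set.Icc (0 : ℝ) 1,
      |g n x y - gstar x y| ≤ 4 * ρ * δ * π y / (1 - ρ) :=
  successive_substitution_error_bound_general ρ hρ π hπmeas hπnn hπbd hπint b hbmeas hbbd g hg0meas
    hg0bd hgrec gstar hgstar δ n hn hstop
end
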